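/- arXiv:1311.7673 — 5 statements merged into one kernel-verified Lean document; each statement's English description precedes it below -/
import Mathlib

section
/- Let (a,b,c) = (7m−3, 5m²−2m, 8m−3) for an integer m ≥ 4 with 3 ∤ m. Then a, b, c are pairwise coprime. -/
/-! Write `b = m (5m - 2)`. A common divisor of `m` and `7m - 3` (or `8m - 3`) divides `3`,
which is excluded by `3 ∤ m`; `5m - 2` is coprime to both `7m - 3` and `8m - 3` by explicit
Bézout identities; and `(8m - 3) - (7m - 3) = m` reduces the last pair to the first case. -/

theorem IsCoprime.mul_sub_left {R : Type*} [CommRing R] {c m : R} (h : IsCoprime c m) (k : R) :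
    IsCoprime (k * m - c) m := by
  rw [show k * m - c = -(c - k * m) by ring, IsCoprime.neg_left_iff,
    IsCoprime.sub_mul_right_left_iff]
  exact h

theorem stmt1_general (m : ℤ) (h3 : ¬ (3 ∣ m)) :
    IsCoprime (7 * m - 3) (5 * m ^ 2 - 2 * m) ∧
    IsCoprime (5 * m ^ 2 - 2 * m) (8 * m - 3) ∧
    IsCoprime (7 * m - 3) (8 * m - 3) := by
  have h3m : IsCoprime (3 : ℤ) m := Int.prime_three.coprime_iff_not_dvd.mpr h3
  have ham : IsCoprime (7 * m - 3) m := h3m.mul_sub_left 7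
  have hcm : IsCoprime (8 * m - 3) m := h3m.mul_sub_left 8
  have ha5 : IsCoprime (7 * m - 3) (5 * m - 2) := ⟨-5, 7, by ring⟩
  have hc5 : IsCoprime (8 * m - 3) (5 * m - 2) := ⟨5, -8, by ring⟩
  have hb : 5 * m ^ 2 - 2 * m = m * (5 * m - 2) := by ring
  refine ⟨hb ▸ ham.mul_right ha5, hb ▸ (hcm.mul_right hc5).symm, ?_⟩
  rw [show 8 * m - 3 = m + (7 * m - 3) * 1 by ring, IsCoprime.add_mul_left_right_iff]
  exact ham

/-- For `(a,b,c) = (7m−3, 5m²−2m, 8m−3)` with `m ≥ 4`, `3 ∤ m`,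
the integers `a, b, c` are pairwise coprime. -/
theorem stmt1 (m : ℤ) (hm : 4 ≤ m) (h3 : ¬ (3 ∣ m)) :
    IsCoprime (7 * m - 3) (5 * m ^ 2 - 2 * m) ∧
    IsCoprime (5 * m ^ 2 - 2 * m) (8 * m - 3) ∧
    IsCoprime (7 * m - 3) (8 * m - 3) :=
  stmt1_general m h3
end

section
/- In the polynomial ring ℤ[x,y,z], with a = z^{3m−1} − x^{2m−1}y², b = x^{3m−1} − yz^{2m−1}, c = y³ − x^m z^m, and d₂ = x^{m−1}y⁵z^{m−1} − 3x^{2m−1}y²z^{2m−1} + x^{5m−2}y + z^{5m−2}, the identity x^m d₂ − y b² + z^{m−1} a c = 0 holds for every integer m ≥ 1. -/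
/- With `m = k + 1` every truncated exponent becomes an honest natural number, and the identity
holds in any commutative ring. For `m = 0` all those exponents truncate to `0`, and the
resulting one-variable identity in `y` happens to hold as well. -/

open MvPolynomial

noncomputable def px : MvPolynomial (Fin 3) ℤ := X 0
noncomputable def py : MvPolynomial (Fin 3) ℤ := X 1
noncomputable def pz : MvPolynomial (Fin 3) ℤ := X 2

noncomputable def pa (m : ℕ) : MvPolynomial (Fin 3) ℤ :=
  pz ^ (3 * m - 1) - px ^ (2 * m - 1) * py ^ 2

noncomputable def pb (m : ℕ) : MvPolynomial (Fin 3) ℤ :=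
  px ^ (3 * m - 1) - py * pz ^ (2 * m - 1)

noncomputable def pc (m : ℕ) : MvPolynomial (Fin 3) ℤ :=
  py ^ 3 - px ^ m * pz ^ m

noncomputable def pd2 (m : ℕ) : MvPolynomial (Fin 3) ℤ :=
  px ^ (m - 1) * py ^ 5 * pz ^ (m - 1) - 3 * px ^ (2 * m - 1) * py ^ 2 * pz ^ (2 * m - 1)
    + px ^ (5 * m - 2) * py + pz ^ (5 * m - 2)

theorem syzygy_identity_succ {R : Type*} [CommRing R] (x y z : R) (k : ℕ) :
    x ^ (k + 1) * (x ^ k * y ^ 5 * z ^ k - 3 * x ^ (2 * k + 1) * y ^ 2 * z ^ (2 * k + 1)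
        + x ^ (5 * k + 3) * y + z ^ (5 * k + 3))
      - y * (x ^ (3 * k + 2) - y * z ^ (2 * k + 1)) ^ 2
      + z ^ k * (z ^ (3 * k + 2) - x ^ (2 * k + 1) * y ^ 2) * (y ^ 3 - x ^ (k + 1) * z ^ (k + 1))
      = 0 := by
  ring

theorem syzygy_identity_zero {R : Type*} [CommRing R] (y : R) :
    (y ^ 5 - 3 * y ^ 2 + y + 1) - y * (1 - y) ^ 2 + (1 - y ^ 2) * (y ^ 3 - 1) = 0 := by
  ring

theorem stmt3_general (m : ℕ) :
    px ^ m * pd2 m - py * (pb m) ^ 2 + pz ^ (m - 1) * pa m * pc m = 0 := by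
  cases m with
  | zero => simpa [pa, pb, pc, pd2] using syzygy_identity_zero py
  | succ k =>
    have h3 : 3 * (k + 1) - 1 = 3 * k + 2 := by omega
    have h2 : 2 * (k + 1) - 1 = 2 * k + 1 := by omega
    have h5 : 5 * (k + 1) - 2 = 5 * k + 3 := by omega
    simpa only [pa, pb, pc, pd2, h3, h2, h5, Nat.add_sub_cancel] using syzygy_identity_succ px py pz k

/-- In `ℤ[x,y,z]`, `x^m d₂ − y b² + z^{m−1} a c = 0` for every `m ≥ 1`. -/
theorem stmt3 (m : ℕ) (hm : 1 ≤ m) :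
    px ^ m * pd2 m - py * (pb m) ^ 2 + pz ^ (m - 1) * pa m * pc m = 0 :=
  stmt3_general m
end

section
/- In ℤ[x,y,z], with a, b, c, d₂ as above, d₃ = −x^{3m−2}y⁷ + 2x^{m−1}y⁵z^{3m−1} + x^{4m−2}y⁴z^m − 5x^{2m−1}y²z^{4m−1} + 3x^{5m−2}yz^{2m} − x^{8m−3}z + z^{7m−2}, the identity x^{m−1} b² c + a d₂ − z^{m−1} d₃ = 0 holds for every integer m ≥ 1. -/
open MvPolynomial

noncomputable def pd3 (m : ℕ) : MvPolynomial (Fin 3) ℤ :=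
  - px ^ (3 * m - 2) * py ^ 7 + 2 * px ^ (m - 1) * py ^ 5 * pz ^ (3 * m - 1)
    + px ^ (4 * m - 2) * py ^ 4 * pz ^ m - 5 * px ^ (2 * m - 1) * py ^ 2 * pz ^ (4 * m - 1)
    + 3 * px ^ (5 * m - 2) * py * pz ^ (2 * m) - px ^ (8 * m - 3) * pz + pz ^ (7 * m - 2)

/-- With `m = k + 1` every exponent becomes a genuine linear form in `k`, free of truncated
subtraction, so the identity holds in any commutative ring by normalization. -/
theorem syzygy_of_succ {R : Type*} [CommRing R] (x y z : R) (k : ℕ) :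
    x ^ k * (x ^ (3 * k + 2) - y * z ^ (2 * k + 1)) ^ 2 * (y ^ 3 - x ^ (k + 1) * z ^ (k + 1))
      + (z ^ (3 * k + 2) - x ^ (2 * k + 1) * y ^ 2)
        * (x ^ k * y ^ 5 * z ^ k - 3 * x ^ (2 * k + 1) * y ^ 2 * z ^ (2 * k + 1)
          + x ^ (5 * k + 3) * y + z ^ (5 * k + 3))
      - z ^ k * (- x ^ (3 * k + 1) * y ^ 7 + 2 * x ^ k * y ^ 5 * z ^ (3 * k + 2)
          + x ^ (4 * k + 2) * y ^ 4 * z ^ (k + 1) - 5 * x ^ (2 * k + 1) * y ^ 2 * z ^ (4 * k + 3)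
          + 3 * x ^ (5 * k + 3) * y * z ^ (2 * k + 2) - x ^ (8 * k + 5) * z + z ^ (7 * k + 5)) = 0 := by
  ring

/-- In `ℤ[x,y,z]`, `x^{m−1} b² c + a d₂ − z^{m−1} d₃ = 0` for every `m ≥ 1`. -/
theorem stmt5 (m : ℕ) (hm : 1 ≤ m) :
    px ^ (m - 1) * (pb m) ^ 2 * pc m + pa m * pd2 m - pz ^ (m - 1) * pd3 m = 0 := by
  obtain ⟨k, rfl⟩ := Nat.exists_eq_add_of_le' hm
  simp only [pa, pb, pc, pd2, pd3, Nat.mul_add, Nat.mul_one, Nat.reduceSubDiff]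
  exact syzygy_of_succ px py pz k
end

section
/- Let m ≥ 4 be an integer. The determinant of the 6×6 matrix whose rows are indexed by the six monomials x^{m−1}y⁵z^{3m−2}, x^{4m−2}y⁴z^{m−1}, x^{2m−1}y²z^{4m−2}, x^{5m−2}yz^{2m−1}, x^{8m−3}, z^{7m−3} and whose columns record the six second-order partial derivatives (∂²/∂x², ∂²/∂x∂y, ∂²/∂x∂z, ∂²/∂y², ∂²/∂y∂z, ∂²/∂z²) evaluated at the point (1,1,1), equals up to sign 4(7m−3)²(8m−3)²(7m−4)(8m−4)(51m²−43m+9); in particular this determinant is nonzero. -/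
/-- The exponent triples of the six monomials of weighted degree `(7m−3)(8m−3)`. -/
def expTriples (m : ℤ) : Fin 6 → ℤ × ℤ × ℤ :=
  ![(m - 1, 5, 3 * m - 2), (4 * m - 2, 4, m - 1), (2 * m - 1, 2, 4 * m - 2),
    (5 * m - 2, 1, 2 * m - 1), (8 * m - 3, 0, 0), (0, 0, 7 * m - 3)]

/-- The matrix of second-order partial derivatives of the six monomials at `(1,1,1)`:
for a monomial `x^i y^j z^k`, the six values are `i(i−1), ij, ik, j(j−1), jk, k(k−1)`. -/
def hessMatrix (m : ℤ) : Matrix (Fin 6) (Fin 6) ℤ := fun r s =>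
  let i := (expTriples m r).1
  let j := (expTriples m r).2.1
  let k := (expTriples m r).2.2
  ![i * (i - 1), i * j, i * k, j * (j - 1), j * k, k * (k - 1)] s

theorem Matrix.det_succ_row_of_forall_ne_eq_zero {R : Type*} [CommRing R] {n : ℕ}
    (A : Matrix (Fin (n + 1)) (Fin (n + 1)) R) (i j : Fin (n + 1)) (hA : ∀ k ≠ j, A i k = 0) :
    A.det = (-1) ^ (i + j : ℕ) * A i j * (A.submatrix i.succAbove j.succAbove).det := by
  rw [Matrix.det_succ_row A i, Fintype.sum_eq_single j fun k hk => by rw [hA k hk, mul_zero, zero_mul]]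

/-- The rows of the four mixed monomials and the columns of `∂²/∂x∂y, ∂²/∂x∂z, ∂²/∂y², ∂²/∂y∂z`. -/
def hessMinor (m : ℤ) : Matrix (Fin 4) (Fin 4) ℤ :=
  (hessMatrix m).submatrix (Fin.castSucc ∘ Fin.castSucc) (Fin.castSucc ∘ Fin.succ)

/- Laplace expansion along the rows of `z^(7m-3)` and `x^(8m-3)`, whose only nonzero entries are
`k(k-1)` and `i(i-1)`. -/
theorem hessMatrix_det_eq_mul_hessMinor_det (m : ℤ) :
    (hessMatrix m).det = (7 * m - 3) * (7 * m - 4) * ((8 * m - 3) * (8 * m - 4)) * (hessMinor m).det := by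
  have hz : hessMatrix m (Fin.last 5) (Fin.last 5) = (7 * m - 3) * (7 * m - 4) := by
    show (7 * m - 3) * (7 * m - 3 - 1) = _
    ring
  have hx : hessMatrix m (Fin.last 4).castSucc (Fin.castSucc 0) = (8 * m - 3) * (8 * m - 4) := by
    show (8 * m - 3) * (8 * m - 3 - 1) = _
    ring
  rw [Matrix.det_succ_row_of_forall_ne_eq_zero _ (Fin.last 5) (Fin.last 5) ?rowZ, Fin.succAbove_last,
    Matrix.det_succ_row_of_forall_ne_eq_zero _ (Fin.last 4) 0 ?rowX, Fin.succAbove_last,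
    Fin.succAbove_zero, Matrix.submatrix_submatrix, Matrix.submatrix_apply, hz, hx, hessMinor]
  case rowZ => intro k hk; fin_cases k <;> simp_all [hessMatrix, expTriples]
  case rowX => intro k hk; fin_cases k <;> simp_all [hessMatrix, expTriples]
  simp only [Fin.val_last, Fin.val_zero]
  ring

theorem hessMinor_eq (m : ℤ) :
    hessMinor m =
      !![5 * (m - 1), (m - 1) * (3 * m - 2), 20, 5 * (3 * m - 2);
        4 * (4 * m - 2), (4 * m - 2) * (m - 1), 12, 4 * (m - 1);
        2 * (2 * m - 1), (2 * m - 1) * (4 * m - 2), 2, 2 * (4 * m - 2);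
        5 * m - 2, (5 * m - 2) * (2 * m - 1), 0, 2 * m - 1] := by
  ext i j
  fin_cases i <;> fin_cases j <;> simp [hessMinor, hessMatrix, expTriples] <;> ring

theorem hessMinor_det (m : ℤ) :
    (hessMinor m).det = -(4 * (7 * m - 3) * (8 * m - 3) * (51 * m ^ 2 - 43 * m + 9)) := by
  rw [hessMinor_eq]
  simp only [Matrix.det_succ_row_zero, Fin.sum_univ_succ, Fin.sum_univ_zero, Matrix.det_isEmpty,
    Fin.succ_succAbove_succ, Fin.succ_succAbove_zero, Fin.zero_succAbove,
    Matrix.submatrix_apply, Matrix.of_apply, Matrix.cons_val_succ, Matrix.cons_val_zero,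
    Fin.val_zero, Fin.val_succ]
  ring

theorem hessMatrix_det (m : ℤ) :
    (hessMatrix m).det =
      -(4 * (7 * m - 3) ^ 2 * (8 * m - 3) ^ 2 * (7 * m - 4) * (8 * m - 4)
        * (51 * m ^ 2 - 43 * m + 9)) := by
  rw [hessMatrix_det_eq_mul_hessMinor_det, hessMinor_det]
  ring

/- The real roots `(43 ± √13) / 102` both lie strictly between `0` and `1`. -/
theorem fiftyOne_mul_sq_sub_fortyThree_mul_add_nine_pos (m : ℤ) : 0 < 51 * m ^ 2 - 43 * m + 9 := by
  rcases le_or_gt m 0 with hm | hm <;> nlinarith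

theorem stmt8_general (m : ℤ) :
    ((hessMatrix m).det =
        4 * (7 * m - 3) ^ 2 * (8 * m - 3) ^ 2 * (7 * m - 4) * (8 * m - 4)
          * (51 * m ^ 2 - 43 * m + 9) ∨
      (hessMatrix m).det =
        -(4 * (7 * m - 3) ^ 2 * (8 * m - 3) ^ 2 * (7 * m - 4) * (8 * m - 4)
          * (51 * m ^ 2 - 43 * m + 9))) ∧
    (hessMatrix m).det ≠ 0 := by
  refine ⟨Or.inr (hessMatrix_det m), ?_⟩
  have hquad := (fiftyOne_mul_sq_sub_fortyThree_mul_add_nine_pos m).ne'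
  rw [hessMatrix_det]
  simp only [neg_ne_zero, mul_ne_zero_iff, ne_eq, pow_eq_zero_iff two_ne_zero, hquad,
    not_false_eq_true, and_true]
  omega

/-- For `m ≥ 4`, the determinant of the `6×6` matrix of second-order partials of the six
monomials evaluated at `(1,1,1)` equals, up to sign,
`4(7m−3)²(8m−3)²(7m−4)(8m−4)(51m²−43m+9)`; in particular it is nonzero. -/
theorem stmt8 (m : ℤ) (hm : 4 ≤ m) :
    ((hessMatrix m).det =
        4 * (7 * m - 3) ^ 2 * (8 * m - 3) ^ 2 * (7 * m - 4) * (8 * m - 4)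
          * (51 * m ^ 2 - 43 * m + 9) ∨
      (hessMatrix m).det =
        -(4 * (7 * m - 3) ^ 2 * (8 * m - 3) ^ 2 * (7 * m - 4) * (8 * m - 4)
          * (51 * m ^ 2 - 43 * m + 9))) ∧
    (hessMatrix m).det ≠ 0 :=
  stmt8_general m
end

section
/- Let N be a free ℤ-module with basis-like generators e₁,…,e_{n−2} subject to e₁+…+e_{n−2}=0, partition {1,…,n−2} = S₁ ⊔ S₂ ⊔ S₃ into sets of sizes a+2, b+2, c+2 where a,b,c are positive pairwise coprime integers, fix nᵢ ∈ Sᵢ, and let N'' ⊆ N be the subgroup generated by the vectors e_{nᵢ} + e_r for r ∈ Sᵢ∖{nᵢ}, i = 1,2,3. Then the quotient N' = N/N'' is a free ℤ-module of rank 2 (torsion-free), it is generated by the images π(e_{n₁}), π(e_{n₂}), π(e_{n₃}), and a·π(e_{n₁}) + b·π(e_{n₂}) + c·π(e_{n₃}) = 0. -/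
/-!
In `N'` every `e_r` with `r ∈ Sᵢ ∖ {nᵢ}` equals `-e_{nᵢ}`, so `N'` is spanned by the three
leaders `e_{nᵢ}`, and since `|S₁| = a + 2`, … the relation `e₁ + ⋯ + e_{n-2} = 0` becomes
`a e_{n₁} + b e_{n₂} + c e_{n₃} = 0`. Conversely, sending `e_r` for `r ∈ Sᵢ` to `±Eᵢ` (standard
basis of `ℤ³`, sign `+` exactly at `nᵢ`) respects all relations, and this shows that
`N' ≅ ℤ³ / ℤ (a, b, c)`. If `u a + v b = 1`, the map
`x ↦ (b x₀ - a x₁, x₂ - c (u x₀ + v x₁))` is onto `ℤ²` with kernel `ℤ (a, b, c)`, so `N' ≅ ℤ²`.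
-/

open Submodule

section SignedIndicator

variable {ι M : Type*} [DecidableEq ι] [AddCommGroup M]

def signedIndicator (S : Finset ι) (x : ι) (y : M) (r : ι) : M :=
  if r ∈ S then (if r = x then y else -y) else 0

theorem signedIndicator_of_notMem {S : Finset ι} {r : ι} (hr : r ∉ S) (x : ι) (y : M) :
    signedIndicator S x y r = 0 :=
  if_neg hr

theorem map_signedIndicator {N F : Type*} [AddCommGroup N] [FunLike F M N]
    [AddMonoidHomClass F M N] (g : F) (S : Finset ι) (x : ι) (y : M) (r : ι) :
    g (signedIndicator S x y r) = signedIndicator S x (g y) r := by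
  unfold signedIndicator
  split_ifs <;> simp

theorem signedIndicator_mem_span_singleton {R : Type*} [Ring R] [Module R M] (S : Finset ι)
    (x : ι) (y : M) (r : ι) : signedIndicator S x y r ∈ R ∙ y := by
  unfold signedIndicator
  split_ifs
  exacts [mem_span_singleton_self y, neg_mem (mem_span_singleton_self y), zero_mem _]

theorem sum_signedIndicator [Fintype ι] {S : Finset ι} {x : ι} (hx : x ∈ S) {m : ℕ}
    (hS : S.card = m + 2) (y : M) : ∑ r, signedIndicator S x y r = -(m • y) := by
  unfold signedIndicator
  rw [Finset.sum_ite_mem, Finset.univ_inter, ← Finset.add_sum_erase _ _ hx, if_pos rfl,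
    Finset.sum_congr rfl fun r hr ↦ if_neg (Finset.ne_of_mem_erase hr), Finset.sum_const,
    Finset.card_erase_of_mem hx, hS, show m + 2 - 1 = m + 1 from rfl, succ_nsmul, smul_neg]
  abel

end SignedIndicator

structure IsPointedTripartition {ι : Type*} [Fintype ι] [DecidableEq ι]
    (S₁ S₂ S₃ : Finset ι) (n₁ n₂ n₃ : ι) : Prop where
  disjoint₁₂ : Disjoint S₁ S₂
  disjoint₂₃ : Disjoint S₂ S₃
  disjoint₁₃ : Disjoint S₁ S₃
  union_eq_univ : S₁ ∪ S₂ ∪ S₃ = Finset.univ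
  mem₁ : n₁ ∈ S₁
  mem₂ : n₂ ∈ S₂
  mem₃ : n₃ ∈ S₃

section BlockSigned

variable {ι M : Type*} [DecidableEq ι] [AddCommGroup M] {S₁ S₂ S₃ : Finset ι} {n₁ n₂ n₃ : ι}

def blockSigned (S₁ S₂ S₃ : Finset ι) (n₁ n₂ n₃ : ι) (y₁ y₂ y₃ : M) (r : ι) : M :=
  signedIndicator S₁ n₁ y₁ r + signedIndicator S₂ n₂ y₂ r + signedIndicator S₃ n₃ y₃ r

theorem map_blockSigned {N F : Type*} [AddCommGroup N] [FunLike F M N]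
    [AddMonoidHomClass F M N] (g : F) (y₁ y₂ y₃ : M) (r : ι) :
    g (blockSigned S₁ S₂ S₃ n₁ n₂ n₃ y₁ y₂ y₃ r) =
      blockSigned S₁ S₂ S₃ n₁ n₂ n₃ (g y₁) (g y₂) (g y₃) r := by
  simp only [blockSigned, map_add, map_signedIndicator]

theorem blockSigned_mem_span {R : Type*} [Ring R] [Module R M] (y₁ y₂ y₃ : M) (r : ι) :
    blockSigned S₁ S₂ S₃ n₁ n₂ n₃ y₁ y₂ y₃ r ∈ span R {y₁, y₂, y₃} := by
  refine add_mem (add_mem ?_ ?_) ?_ <;>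
    refine span_mono ?_ (signedIndicator_mem_span_singleton _ _ _ r) <;> simp

theorem sum_blockSigned [Fintype ι] {a b c : ℕ} (hn₁ : n₁ ∈ S₁) (hn₂ : n₂ ∈ S₂) (hn₃ : n₃ ∈ S₃)
    (hS₁ : S₁.card = a + 2) (hS₂ : S₂.card = b + 2) (hS₃ : S₃.card = c + 2) (y₁ y₂ y₃ : M) :
    ∑ r, blockSigned S₁ S₂ S₃ n₁ n₂ n₃ y₁ y₂ y₃ r = -(a • y₁ + b • y₂ + c • y₃) := by
  simp only [blockSigned, Finset.sum_add_distrib, sum_signedIndicator hn₁ hS₁,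
    sum_signedIndicator hn₂ hS₂, sum_signedIndicator hn₃ hS₃, neg_add]

namespace IsPointedTripartition

variable [Fintype ι] (hP : IsPointedTripartition S₁ S₂ S₃ n₁ n₂ n₃) {y₁ y₂ y₃ : M} {r : ι}
include hP

theorem blockSigned_of_mem₁ (hr : r ∈ S₁) :
    blockSigned S₁ S₂ S₃ n₁ n₂ n₃ y₁ y₂ y₃ r = if r = n₁ then y₁ else -y₁ := by
  rw [blockSigned, signedIndicator_of_notMem (Finset.disjoint_left.1 hP.disjoint₁₂ hr),
    signedIndicator_of_notMem (Finset.disjoint_left.1 hP.disjoint₁₃ hr)]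
  simp [signedIndicator, hr]

theorem blockSigned_of_mem₂ (hr : r ∈ S₂) :
    blockSigned S₁ S₂ S₃ n₁ n₂ n₃ y₁ y₂ y₃ r = if r = n₂ then y₂ else -y₂ := by
  rw [blockSigned, signedIndicator_of_notMem (Finset.disjoint_right.1 hP.disjoint₁₂ hr),
    signedIndicator_of_notMem (Finset.disjoint_left.1 hP.disjoint₂₃ hr)]
  simp [signedIndicator, hr]

theorem blockSigned_of_mem₃ (hr : r ∈ S₃) :
    blockSigned S₁ S₂ S₃ n₁ n₂ n₃ y₁ y₂ y₃ r = if r = n₃ then y₃ else -y₃ := by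
  rw [blockSigned, signedIndicator_of_notMem (Finset.disjoint_right.1 hP.disjoint₁₃ hr),
    signedIndicator_of_notMem (Finset.disjoint_right.1 hP.disjoint₂₃ hr)]
  simp [signedIndicator, hr]

@[simp]
theorem blockSigned_self₁ : blockSigned S₁ S₂ S₃ n₁ n₂ n₃ y₁ y₂ y₃ n₁ = y₁ := by
  simp [hP.blockSigned_of_mem₁ hP.mem₁]

@[simp]
theorem blockSigned_self₂ : blockSigned S₁ S₂ S₃ n₁ n₂ n₃ y₁ y₂ y₃ n₂ = y₂ := by
  simp [hP.blockSigned_of_mem₂ hP.mem₂]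

@[simp]
theorem blockSigned_self₃ : blockSigned S₁ S₂ S₃ n₁ n₂ n₃ y₁ y₂ y₃ n₃ = y₃ := by
  simp [hP.blockSigned_of_mem₃ hP.mem₃]

theorem eq_blockSigned {h : ι → M} (h₁ : ∀ r ∈ S₁.erase n₁, h r = -h n₁)
    (h₂ : ∀ r ∈ S₂.erase n₂, h r = -h n₂) (h₃ : ∀ r ∈ S₃.erase n₃, h r = -h n₃) :
    h = blockSigned S₁ S₂ S₃ n₁ n₂ n₃ (h n₁) (h n₂) (h n₃) := by
  funext r
  have hr : r ∈ S₁ ∪ S₂ ∪ S₃ := hP.union_eq_univ ▸ Finset.mem_univ r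
  simp only [Finset.mem_union] at hr
  rcases hr with (hr | hr) | hr
  · rw [hP.blockSigned_of_mem₁ hr]
    split_ifs with hrn
    exacts [congrArg h hrn, h₁ r (Finset.mem_erase.2 ⟨hrn, hr⟩)]
  · rw [hP.blockSigned_of_mem₂ hr]
    split_ifs with hrn
    exacts [congrArg h hrn, h₂ r (Finset.mem_erase.2 ⟨hrn, hr⟩)]
  · rw [hP.blockSigned_of_mem₃ hr]
    split_ifs with hrn
    exacts [congrArg h hrn, h₃ r (Finset.mem_erase.2 ⟨hrn, hr⟩)]

end IsPointedTripartition

end BlockSigned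

section TripleQuotient

variable {R : Type*} [CommRing R]

theorem mkQ_span_triple_relation (a b c : R) :
    a • mkQ (R ∙ ![a, b, c]) (Pi.single 0 1) + b • mkQ (R ∙ ![a, b, c]) (Pi.single 1 1) +
      c • mkQ (R ∙ ![a, b, c]) (Pi.single 2 1) = 0 := by
  rw [← map_smul, ← map_smul, ← map_smul, ← map_add, ← map_add, mkQ_apply, Quotient.mk_eq_zero]
  convert mem_span_singleton_self ![a, b, c]
  ext i; fin_cases i <;> simp

theorem nonempty_quotient_span_triple_equiv {a b : R} (hab : IsCoprime a b) (c : R) :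
    Nonempty (((Fin 3 → R) ⧸ R ∙ ![a, b, c]) ≃ₗ[R] (Fin 2 → R)) := by
  obtain ⟨u, v, huv⟩ := hab
  let F : (Fin 3 → R) →ₗ[R] (Fin 2 → R) := Matrix.toLin' !![b, -a, 0; -c * u, -c * v, 1]
  have hF₀ (x : Fin 3 → R) : F x 0 = b * x 0 - a * x 1 := by
    simp [F, Matrix.vecHead, Matrix.vecTail, sub_eq_add_neg]
  have hF₁ (x : Fin 3 → R) : F x 1 = x 2 - c * (u * x 0 + v * x 1) := by
    simp [F, Matrix.vecHead, Matrix.vecTail]; ring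
  have hF : Function.Surjective F := fun y ↦ ⟨![v * y 0, -u * y 0, y 1], by
    ext i; fin_cases i
    · simp [hF₀]; linear_combination y 0 * huv
    · simp [hF₁]; ring⟩
  have hker : LinearMap.ker F = R ∙ ![a, b, c] := by
    refine le_antisymm (fun x hx ↦ ?_) ((span_singleton_le_iff_mem _ _).2 ?_)
    · have h₀ : b * x 0 - a * x 1 = 0 := hF₀ x ▸ congrFun hx 0
      have h₁ : x 2 - c * (u * x 0 + v * x 1) = 0 := hF₁ x ▸ congrFun hx 1
      refine mem_span_singleton.2 ⟨u * x 0 + v * x 1, ?_⟩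
      ext i; fin_cases i <;> simp
      · linear_combination x 0 * huv - v * h₀
      · linear_combination x 1 * huv + u * h₀
      · linear_combination -h₁
    · rw [LinearMap.mem_ker]
      ext i; fin_cases i
      · simp [hF₀]; ring
      · simp [hF₁]; linear_combination -c * huv
  exact ⟨(quotEquivOfEq _ _ hker.symm).trans (F.quotKerEquivOfSurjective hF)⟩

end TripleQuotient

section PointedRelations

variable (R : Type*) {ι : Type*} [CommRing R] [DecidableEq ι] (S₁ S₂ S₃ : Finset ι) (n₁ n₂ n₃ : ι)

def pointedRelations : Set (ι → R) :=
  (fun r ↦ Pi.single n₁ 1 + Pi.single r 1) '' (S₁.erase n₁ : Set ι) ∪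
    (fun r ↦ Pi.single n₂ 1 + Pi.single r 1) '' (S₂.erase n₂ : Set ι) ∪
    (fun r ↦ Pi.single n₃ 1 + Pi.single r 1) '' (S₃.erase n₃ : Set ι)

variable {R S₁ S₂ S₃ n₁ n₂ n₃} {M : Type*} [AddCommGroup M] [Module R M]

theorem forall_pointedRelations_eq_zero_iff (f : (ι → R) →ₗ[R] M) :
    (∀ x ∈ pointedRelations R S₁ S₂ S₃ n₁ n₂ n₃, f x = 0) ↔
      (∀ r ∈ S₁.erase n₁, f (Pi.single r 1) = -f (Pi.single n₁ 1)) ∧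
      (∀ r ∈ S₂.erase n₂, f (Pi.single r 1) = -f (Pi.single n₂ 1)) ∧
      (∀ r ∈ S₃.erase n₃, f (Pi.single r 1) = -f (Pi.single n₃ 1)) := by
  simp only [pointedRelations, Set.mem_union, or_imp, forall_and, Set.forall_mem_image,
    Finset.mem_coe, map_add, add_eq_zero_iff_eq_neg']
  tauto

end PointedRelations

section PointedQuotient

variable (R : Type*) {ι : Type*} [CommRing R] [Fintype ι] [DecidableEq ι]
  (S₁ S₂ S₃ : Finset ι) (n₁ n₂ n₃ : ι)

abbrev PointedQuotient : Type _ :=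
  ((ι → R) ⧸ R ∙ ∑ i, Pi.single i 1) ⧸
    span R (mkQ (R ∙ ∑ i, Pi.single i 1) '' pointedRelations R S₁ S₂ S₃ n₁ n₂ n₃)

def PointedQuotient.proj : (ι → R) →ₗ[R] PointedQuotient R S₁ S₂ S₃ n₁ n₂ n₃ :=
  (mkQ _).comp (mkQ _)

variable {R S₁ S₂ S₃ n₁ n₂ n₃} {M : Type*} [AddCommGroup M] [Module R M]

local notation "π" => PointedQuotient.proj R S₁ S₂ S₃ n₁ n₂ n₃

namespace PointedQuotient

theorem proj_sum_single : π (∑ i, Pi.single i 1) = 0 := by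
  have : mkQ (R ∙ _) (∑ i : ι, Pi.single i (1 : R)) = 0 :=
    (Quotient.mk_eq_zero _).2 (mem_span_singleton_self _)
  rw [proj, LinearMap.comp_apply, this, map_zero]

theorem proj_eq_zero_of_mem {x : ι → R} (hx : x ∈ pointedRelations R S₁ S₂ S₃ n₁ n₂ n₃) :
    π x = 0 :=
  (Quotient.mk_eq_zero _).2 (subset_span (Set.mem_image_of_mem _ hx))

def lift (f : (ι → R) →ₗ[R] M) (hsum : f (∑ i, Pi.single i 1) = 0)
    (hrel : ∀ x ∈ pointedRelations R S₁ S₂ S₃ n₁ n₂ n₃, f x = 0) :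
    PointedQuotient R S₁ S₂ S₃ n₁ n₂ n₃ →ₗ[R] M :=
  liftQ _ (liftQ _ f ((span_singleton_le_iff_mem _ _).2 hsum)) <| span_le.2 <| by
    rintro _ ⟨x, hx, rfl⟩
    exact hrel x hx

@[simp]
theorem lift_proj (f : (ι → R) →ₗ[R] M) (hsum hrel) (x : ι → R) :
    lift f hsum hrel (π x) = f x :=
  rfl

theorem hom_ext {f g : PointedQuotient R S₁ S₂ S₃ n₁ n₂ n₃ →ₗ[R] M}
    (h : ∀ i, f (π (Pi.single i 1)) = g (π (Pi.single i 1))) : f = g :=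
  linearMap_qext _ <| linearMap_qext _ <| (Pi.basisFun R ι).ext fun i ↦ by simpa [proj] using h i

end PointedQuotient

namespace IsPointedTripartition

open PointedQuotient

variable (hP : IsPointedTripartition S₁ S₂ S₃ n₁ n₂ n₃)
include hP

theorem proj_single_eq_blockSigned :
    (fun r ↦ π (Pi.single r 1)) =
      blockSigned S₁ S₂ S₃ n₁ n₂ n₃ (π (Pi.single n₁ 1)) (π (Pi.single n₂ 1))
        (π (Pi.single n₃ 1)) :=
  let ⟨h₁, h₂, h₃⟩ := (forall_pointedRelations_eq_zero_iff _).1 fun _ ↦ proj_eq_zero_of_mem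
  hP.eq_blockSigned h₁ h₂ h₃

theorem proj_relation {a b c : ℕ} (hS₁ : S₁.card = a + 2) (hS₂ : S₂.card = b + 2)
    (hS₃ : S₃.card = c + 2) :
    (a : R) • π (Pi.single n₁ 1) + (b : R) • π (Pi.single n₂ 1) + (c : R) • π (Pi.single n₃ 1) =
      0 := by
  have h : π (∑ i, Pi.single i 1) = 0 := proj_sum_single
  rw [map_sum, hP.proj_single_eq_blockSigned, sum_blockSigned hP.mem₁ hP.mem₂ hP.mem₃ hS₁ hS₂ hS₃,
    neg_eq_zero] at h
  simpa only [Nat.cast_smul_eq_nsmul] using h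

theorem span_proj_leaders :
    span R {π (Pi.single n₁ 1), π (Pi.single n₂ 1), π (Pi.single n₃ 1)} = ⊤ := by
  have hsurj : Function.Surjective π := (mkQ_surjective _).comp (mkQ_surjective _)
  rw [eq_top_iff, ← LinearMap.range_eq_top.2 hsurj, LinearMap.range_eq_map,
    ← (Pi.basisFun R ι).span_eq, map_span, span_le]
  rintro _ ⟨_, ⟨r, rfl⟩, rfl⟩
  rw [Pi.basisFun_apply, congrFun hP.proj_single_eq_blockSigned r]
  exact blockSigned_mem_span _ _ _ r

noncomputable def pointedQuotientEquiv {a b c : ℕ} (hS₁ : S₁.card = a + 2)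
    (hS₂ : S₂.card = b + 2) (hS₃ : S₃.card = c + 2) :
    PointedQuotient R S₁ S₂ S₃ n₁ n₂ n₃ ≃ₗ[R] (Fin 3 → R) ⧸ R ∙ ![(a : R), b, c] :=
  let y := blockSigned S₁ S₂ S₃ n₁ n₂ n₃ (mkQ (R ∙ ![(a : R), b, c]) (Pi.single 0 1))
    (mkQ (R ∙ ![(a : R), b, c]) (Pi.single 1 1)) (mkQ (R ∙ ![(a : R), b, c]) (Pi.single 2 1))
  have hy : ∀ i, Fintype.linearCombination R y (Pi.single i 1) = y i := by
    simp [Fintype.linearCombination_apply_single]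
  LinearEquiv.ofLinearMap
    (lift (Fintype.linearCombination R y)
      (by
        rw [map_sum, Finset.sum_congr rfl fun i _ ↦ hy i,
          sum_blockSigned hP.mem₁ hP.mem₂ hP.mem₃ hS₁ hS₂ hS₃]
        simpa only [neg_eq_zero, Nat.cast_smul_eq_nsmul] using mkQ_span_triple_relation (a : R) b c)
      ((forall_pointedRelations_eq_zero_iff _).2 <| by
        simp only [hy]
        refine ⟨fun r hr ↦ ?_, fun r hr ↦ ?_, fun r hr ↦ ?_⟩
        · simp [y, hP, hP.blockSigned_of_mem₁ (Finset.mem_of_mem_erase hr),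
            Finset.ne_of_mem_erase hr]
        · simp [y, hP, hP.blockSigned_of_mem₂ (Finset.mem_of_mem_erase hr),
            Finset.ne_of_mem_erase hr]
        · simp [y, hP, hP.blockSigned_of_mem₃ (Finset.mem_of_mem_erase hr),
            Finset.ne_of_mem_erase hr]))
    (liftQ _ (Fintype.linearCombination R ![π (Pi.single n₁ 1), π (Pi.single n₂ 1),
        π (Pi.single n₃ 1)])
      ((span_singleton_le_iff_mem _ _).2 <| by
        simpa [Fintype.linearCombination_apply, Fin.sum_univ_three] using
          hP.proj_relation hS₁ hS₂ hS₃))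
    (by ext i; fin_cases i <;> simp [y, hP])
    (hom_ext fun r ↦ by
      simp only [LinearMap.comp_apply, lift_proj, hy, y, map_blockSigned]
      simpa using (congrFun hP.proj_single_eq_blockSigned r).symm)

end IsPointedTripartition

end PointedQuotient

theorem stmt14_general (a b c : ℕ) (hab : Nat.Coprime a b) (n : ℕ)
    (S₁ S₂ S₃ : Finset (Fin (n - 2)))
    (h12 : Disjoint S₁ S₂) (h23 : Disjoint S₂ S₃) (h13 : Disjoint S₁ S₃)
    (hcover : S₁ ∪ S₂ ∪ S₃ = Finset.univ)
    (hS₁ : S₁.card = a + 2) (hS₂ : S₂.card = b + 2) (hS₃ : S₃.card = c + 2)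
    (n₁ n₂ n₃ : Fin (n - 2)) (hn₁ : n₁ ∈ S₁) (hn₂ : n₂ ∈ S₂) (hn₃ : n₃ ∈ S₃) :
    let V : Type := Fin (n - 2) → ℤ
    let e : Fin (n - 2) → V := fun i => Pi.single i 1
    let N := V ⧸ (span ℤ {∑ i, e i})
    let q : V →ₗ[ℤ] N := mkQ (span ℤ {∑ i, e i})
    let N'' : Submodule ℤ N := span ℤ
      (q '' ((fun r => e n₁ + e r) '' (S₁.erase n₁ : Set (Fin (n - 2))) ∪
             (fun r => e n₂ + e r) '' (S₂.erase n₂ : Set (Fin (n - 2))) ∪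
             (fun r => e n₃ + e r) '' (S₃.erase n₃ : Set (Fin (n - 2)))))
    let N' := N ⧸ N''
    let π : V →ₗ[ℤ] N' := (mkQ N'').comp q
    Module.Free ℤ N' ∧ Module.finrank ℤ N' = 2 ∧
      span ℤ {π (e n₁), π (e n₂), π (e n₃)} = ⊤ ∧
      (a : ℤ) • π (e n₁) + (b : ℤ) • π (e n₂) + (c : ℤ) • π (e n₃) = 0 := by
  intro V e N q N'' N' π
  have hP : IsPointedTripartition S₁ S₂ S₃ n₁ n₂ n₃ := ⟨h12, h23, h13, hcover, hn₁, hn₂, hn₃⟩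
  obtain ⟨E₂⟩ := nonempty_quotient_span_triple_equiv (Nat.isCoprime_iff_coprime.2 hab) (c : ℤ)
  let E : N' ≃ₗ[ℤ] (Fin 2 → ℤ) := (hP.pointedQuotientEquiv hS₁ hS₂ hS₃).trans E₂
  exact ⟨.of_equiv E.symm, E.finrank_eq.trans (Module.finrank_fin_fun ℤ), hP.span_proj_leaders,
    hP.proj_relation hS₁ hS₂ hS₃⟩

/-- Let `N = ℤ^{n−2}/⟨e₁+…+e_{n−2}⟩`, partition `{1,…,n−2} = S₁ ⊔ S₂ ⊔ S₃` into sets of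
sizes `a+2, b+2, c+2` (with `a,b,c` positive and pairwise coprime, `n = a+b+c+8`), fix
`nᵢ ∈ Sᵢ`, and let `N'' ⊆ N` be generated by the `e_{nᵢ} + e_r`, `r ∈ Sᵢ∖{nᵢ}`.
Then `N' = N/N''` is free of rank 2, generated by `π(e_{n₁}), π(e_{n₂}), π(e_{n₃})`, and
`a·π(e_{n₁}) + b·π(e_{n₂}) + c·π(e_{n₃}) = 0`. -/
theorem stmt14 (a b c : ℕ) (ha : 0 < a) (hb : 0 < b) (hc : 0 < c)
    (hab : Nat.Coprime a b) (hbc : Nat.Coprime b c) (hac : Nat.Coprime a c)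
    (n : ℕ) (hn : n = a + b + c + 8)
    (S₁ S₂ S₃ : Finset (Fin (n - 2)))
    (h12 : Disjoint S₁ S₂) (h23 : Disjoint S₂ S₃) (h13 : Disjoint S₁ S₃)
    (hcover : S₁ ∪ S₂ ∪ S₃ = Finset.univ)
    (hS₁ : S₁.card = a + 2) (hS₂ : S₂.card = b + 2) (hS₃ : S₃.card = c + 2)
    (n₁ n₂ n₃ : Fin (n - 2)) (hn₁ : n₁ ∈ S₁) (hn₂ : n₂ ∈ S₂) (hn₃ : n₃ ∈ S₃) :
    let V : Type := Fin (n - 2) → ℤ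
    let e : Fin (n - 2) → V := fun i => Pi.single i 1
    let N := V ⧸ (span ℤ {∑ i, e i})
    let q : V →ₗ[ℤ] N := mkQ (span ℤ {∑ i, e i})
    let N'' : Submodule ℤ N := span ℤ
      (q '' ((fun r => e n₁ + e r) '' (S₁.erase n₁ : Set (Fin (n - 2))) ∪
             (fun r => e n₂ + e r) '' (S₂.erase n₂ : Set (Fin (n - 2))) ∪
             (fun r => e n₃ + e r) '' (S₃.erase n₃ : Set (Fin (n - 2)))))
    let N' := N ⧸ N''
    let π : V →ₗ[ℤ] N' := (mkQ N'').comp q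
    Module.Free ℤ N' ∧ Module.finrank ℤ N' = 2 ∧
      span ℤ {π (e n₁), π (e n₂), π (e n₃)} = ⊤ ∧
      (a : ℤ) • π (e n₁) + (b : ℤ) • π (e n₂) + (c : ℤ) • π (e n₃) = 0 :=
  stmt14_general a b c hab n S₁ S₂ S₃ h12 h23 h13 hcover hS₁ hS₂ hS₃ n₁ n₂ n₃ hn₁ hn₂ hn₃
end
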